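/- Let S be a sparse collection of cubes contained in a dyadic lattice of ℝ^d. Then S can be written as a union S = ∪_{i=1}^{8} S^i of eight subcollections, each of which satisfies the stronger sparsity condition: for every Q ∈ S^i, the union of all cubes Q' ∈ S^i with Q' ⊊ Q has Lebesgue measure at most ¼|Q|. -/

import Mathlib

open MeasureTheory ENNReal Set

noncomputable section

/-- An axis-parallel half-open cube in `ℝ^d`. -/
structure Cube (d : ℕ) where
  corner : Fin d → ℝ
  side : ℝ
  side_pos : 0 < side

/-- The underlying set of a cube. -/
def Cube.toSet {d : ℕ} (Q : Cube d) : Set (Fin d → ℝ) :=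
  {x | ∀ i, Q.corner i ≤ x i ∧ x i < Q.corner i + Q.side}

/-- A dyadic lattice of `ℝ^d`: a collection of cubes whose sidelengths are integer
powers of `2`, in which any two cubes are nested or disjoint, and in which every
cube has a parent of twice its sidelength. -/
def IsDyadicLattice {d : ℕ} (D : Set (Cube d)) : Prop :=
  (∀ Q ∈ D, ∃ k : ℤ, Q.side = 2 ^ k) ∧
  (∀ Q ∈ D, ∀ Q' ∈ D,
    Q.toSet ⊆ Q'.toSet ∨ Q'.toSet ⊆ Q.toSet ∨ Disjoint Q.toSet Q'.toSet) ∧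
  (∀ Q ∈ D, ∃ Q' ∈ D, Q.toSet ⊆ Q'.toSet ∧ Q'.side = 2 * Q.side)

/-- A collection `S` of cubes is sparse if for every `Q ∈ S` there is a measurable
`E_Q ⊆ Q` with `|E_Q| > ½ |Q|`, the sets `{E_Q : Q ∈ S}` being pairwise disjoint. -/
def IsSparse {d : ℕ} (S : Set (Cube d)) : Prop :=
  ∃ E : Cube d → Set (Fin d → ℝ),
    (∀ Q ∈ S, MeasurableSet (E Q)) ∧
    (∀ Q ∈ S, E Q ⊆ Q.toSet) ∧
    (∀ Q ∈ S, volume Q.toSet < 2 * volume (E Q)) ∧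
    S.PairwiseDisjoint E

/-- `⟨f⟩_Q = (1/|Q|) ∫_Q |f|`, valued in `ℝ≥0∞`. -/
def avg {d : ℕ} (f : (Fin d → ℝ) → ℝ) (Q : Cube d) : ℝ≥0∞ :=
  (∫⁻ y in Q.toSet, ENNReal.ofReal |f y|) / volume Q.toSet

/-- `w(A) = ∫_A w` for a weight `w`. -/
def wInt {d : ℕ} (w : (Fin d → ℝ) → ℝ) (A : Set (Fin d → ℝ)) : ℝ≥0∞ :=
  ∫⁻ y in A, ENNReal.ofReal (w y)

/-- The Hardy–Littlewood maximal function (over all cubes). -/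
def hlMax {d : ℕ} (f : (Fin d → ℝ) → ℝ) (x : Fin d → ℝ) : ℝ≥0∞ :=
  ⨆ (Q : Cube d) (_ : x ∈ Q.toSet), avg f Q

/-- `log t = log₂ (2 + t)`, extended to `ℝ≥0∞` by `log ∞ = ∞`. -/
def elog (t : ℝ≥0∞) : ℝ≥0∞ :=
  if t = ∞ then ∞ else ENNReal.ofReal (Real.logb 2 (2 + t.toReal))

/-- `ρ_w(Q) = (1/w(Q)) ∫_Q M(1_Q w)`. -/
def rho {d : ℕ} (w : (Fin d → ℝ) → ℝ) (Q : Cube d) : ℝ≥0∞ :=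
  (∫⁻ x in Q.toSet, hlMax (Q.toSet.indicator w) x) / wInt w Q.toSet

/-- A bounded, compactly supported (measurable) function. -/
def BCS {d : ℕ} (f : (Fin d → ℝ) → ℝ) : Prop :=
  Measurable f ∧ (∃ C : ℝ, ∀ x, |f x| ≤ C) ∧ HasCompactSupport f

/-- `T` admits a sparse bilinear domination: for all bounded compactly supported
`f₁, f₂` there are `3^d` sparse collections, each contained in a dyadic lattice, with
`|⟨T f₁, f₂⟩| ≲ ∑_k ∑_{Q ∈ S_k} |Q| ⟨f₁⟩_Q ⟨f₂⟩_Q`. -/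
def HasSparseDomination {d : ℕ} (T : ((Fin d → ℝ) → ℝ) → (Fin d → ℝ) → ℝ) : Prop :=
  ∃ Cd : ℝ, 0 < Cd ∧ ∀ f₁ f₂ : (Fin d → ℝ) → ℝ, BCS f₁ → BCS f₂ →
    ∃ S : Fin (3 ^ d) → Set (Cube d),
      (∀ k, ∃ D, IsDyadicLattice D ∧ S k ⊆ D) ∧
      (∀ k, IsSparse (S k)) ∧
      ENNReal.ofReal |∫ x, T f₁ x * f₂ x| ≤
        ENNReal.ofReal Cd * ∑ k : Fin (3 ^ d), ∑' Q : S k,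
          volume (Q : Cube d).toSet * avg f₁ (Q : Cube d) * avg f₂ (Q : Cube d)

/-- The stronger sparsity condition: for every `Q ∈ S`, the union of the cubes of `S`
strictly contained in `Q` has measure at most `¼|Q|`. -/
def IsStronglySparse {d : ℕ} (S : Set (Cube d)) : Prop :=
  ∀ Q ∈ S,
    volume (⋃ (Q' : Cube d) (_ : Q' ∈ S) (_ : Q'.toSet ⊂ Q.toSet), Q'.toSet) ≤
      volume Q.toSet / 4

/-!
For `Q ∈ S`, sort the cubes of `S` strictly inside `Q` into generations by the number of cubes
of `S` between them and `Q`. Each generation consists of disjoint cubes `P` with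
`|P| < 2 |E_P|`, and the sets `E_P` of the first four generations are disjoint subsets of
`Q \ E_Q`, which has measure less than `|Q| / 2`. Hence one of the first four generations, the
`m_Q`-th say, covers at most `|Q| / 4`. Now colour `S` by depth modulo `4`, depth being measured
consistently among all cubes with a common ancestor in `S`. A cube of the colour of `Q` strictly
inside `Q` lies a positive multiple of `4` generations below `Q`, hence inside a cube of
generation `m_Q`. So four colour classes suffice, and the other four are empty.
-/

theorem Set.PairwiseDisjoint.countable_of_measure_pos {α ι : Type*} [MeasurableSpace α]
    {μ : Measure α} [SFinite μ] {s : Set ι} {f : ι → Set α} (hs : s.PairwiseDisjoint f)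
    (hmeas : ∀ i ∈ s, MeasurableSet (f i)) (hpos : ∀ i ∈ s, 0 < μ (f i)) :
    s.Countable := by
  have h := Measure.countable_meas_pos_of_disjoint_iUnion (μ := μ) (As := fun i : s => f i)
    (fun i => hmeas i i.2) (hs.subtype _ _)
  simp only [fun i : s => hpos i i.2, ofPred_true, countable_univ_iff] at h
  exact countable_coe_iff.mp h

theorem MeasureTheory.two_mul_measure_sdiff_le {α : Type*} [MeasurableSpace α] {μ : Measure α}
    {s t : Set α} (hts : t ⊆ s) (ht : MeasurableSet t) (h : μ s < 2 * μ t) :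
    2 * μ (s \ t) ≤ μ s := by
  have hsplit := measure_inter_add_sdiff (μ := μ) s ht
  rw [inter_eq_right.2 hts] at hsplit
  have ht_ne_top : μ t ≠ ∞ := ne_top_of_le_ne_top h.ne_top (measure_mono hts)
  rw [← hsplit, two_mul] at h ⊢
  exact add_le_add_left ((ENNReal.add_lt_add_iff_left ht_ne_top).1 h).le _

namespace Cube

variable {d : ℕ} {Q Q' : Cube d}

instance : Nonempty (Cube d) := ⟨⟨0, 1, one_pos⟩⟩

lemma toSet_eq_pi (Q : Cube d) :
    Q.toSet = univ.pi fun i => Ico (Q.corner i) (Q.corner i + Q.side) := by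
  ext x
  simp [Cube.toSet]

lemma toSet_nonempty (Q : Cube d) : Q.toSet.Nonempty :=
  ⟨Q.corner, fun _ => ⟨le_rfl, lt_add_of_pos_right _ Q.side_pos⟩⟩

lemma measurableSet_toSet (Q : Cube d) : MeasurableSet Q.toSet := by
  rw [toSet_eq_pi]
  exact .univ_pi fun _ => measurableSet_Ico

lemma volume_toSet (Q : Cube d) : volume Q.toSet = ENNReal.ofReal Q.side ^ d := by
  simp [toSet_eq_pi, volume_pi_pi, Real.volume_Ico]

lemma volume_toSet_pos (Q : Cube d) : 0 < volume Q.toSet := by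
  rw [volume_toSet]
  exact ENNReal.pow_pos (ENNReal.ofReal_pos.2 Q.side_pos) d

lemma toSet_subset_toSet_iff : Q.toSet ⊆ Q'.toSet ↔
    ∀ i, Q'.corner i ≤ Q.corner i ∧ Q.corner i + Q.side ≤ Q'.corner i + Q'.side := by
  rw [toSet_eq_pi, toSet_eq_pi, univ_pi_subset_univ_pi_iff]
  simp [Ico_subset_Ico_iff, Ico_eq_empty_iff, Q.side_pos]

variable [NeZero d]

lemma side_le_of_subset (h : Q.toSet ⊆ Q'.toSet) : Q.side ≤ Q'.side := by
  obtain ⟨h₁, h₂⟩ := toSet_subset_toSet_iff.1 h 0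
  linarith

lemma eq_of_subset_of_side_le (h : Q.toSet ⊆ Q'.toSet) (hs : Q'.side ≤ Q.side) : Q = Q' := by
  have hside : Q.side = Q'.side := le_antisymm (side_le_of_subset h) hs
  have hcorner : Q.corner = Q'.corner := funext fun i => by
    obtain ⟨h₁, h₂⟩ := toSet_subset_toSet_iff.1 h i
    linarith
  cases Q
  cases Q'
  simp_all

lemma toSet_injective : Function.Injective (toSet : Cube d → Set (Fin d → ℝ)) :=
  fun _ _ h => eq_of_subset_of_side_le h.le (side_le_of_subset h.ge)

lemma toSet_ssubset_of_subset_of_ne (h : Q.toSet ⊆ Q'.toSet) (hne : Q ≠ Q') :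
    Q.toSet ⊂ Q'.toSet :=
  h.ssubset_of_ne (toSet_injective.ne hne)

end Cube

lemma isStronglySparse_of_dim_zero (S : Set (Cube 0)) : IsStronglySparse S := by
  intro Q _
  have h : ∀ Q' : Cube 0, Q'.toSet = univ := fun _ => eq_univ_of_forall fun _ i => i.elim0
  simp [h]

section Lattice

variable {d : ℕ} {D : Set (Cube d)}

lemma IsDyadicLattice.subset_or_subset_of_subset_of_subset (hD : IsDyadicLattice D)
    {R P P' : Cube d} (hP : P ∈ D) (hP' : P' ∈ D) (h : R.toSet ⊆ P.toSet)
    (h' : R.toSet ⊆ P'.toSet) : P.toSet ⊆ P'.toSet ∨ P'.toSet ⊆ P.toSet := by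
  rcases hD.2.1 P hP P' hP' with h₁ | h₁ | h₁
  · exact .inl h₁
  · exact .inr h₁
  · exact absurd (disjoint_self.1 (h₁.mono h h')) R.toSet_nonempty.ne_empty

lemma IsDyadicLattice.finite_supersets [NeZero d] (hD : IsDyadicLattice D) {R : Cube d}
    (hR : R ∈ D) (s : ℝ) : {P ∈ D | R.toSet ⊆ P.toSet ∧ P.side ≤ s}.Finite := by
  obtain ⟨k, hk⟩ := hD.1 R hR
  obtain ⟨n, hn⟩ := pow_unbounded_of_one_lt s _root_.one_lt_two
  have hinj : InjOn Cube.side {P ∈ D | R.toSet ⊆ P.toSet ∧ P.side ≤ s} := by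
    intro P hP P' hP' hside
    rcases hD.subset_or_subset_of_subset_of_subset hP.1 hP'.1 hP.2.1 hP'.2.1 with h | h
    · exact Cube.eq_of_subset_of_side_le h hside.ge
    · exact (Cube.eq_of_subset_of_side_le h hside.le).symm
  refine Finite.of_finite_image
    (((finite_Icc k n).image fun j : ℤ => (2 : ℝ) ^ j).subset ?_) hinj
  rintro - ⟨P, ⟨hPD, hRP, hPs⟩, rfl⟩
  obtain ⟨j, hj⟩ := hD.1 P hPD
  refine ⟨j, ⟨?_, ?_⟩, hj.symm⟩
  · rw [← zpow_le_zpow_iff_right₀ (_root_.one_lt_two (α := ℝ)), ← hk, ← hj]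
    exact Cube.side_le_of_subset hRP
  · rw [← zpow_le_zpow_iff_right₀ (_root_.one_lt_two (α := ℝ)), ← hj, zpow_natCast]
    exact hPs.trans hn.le

end Lattice

section RelDepth

variable {d : ℕ}

def ancestorsIn (S : Set (Cube d)) (Q' Q : Cube d) : Set (Cube d) :=
  {P ∈ S | Q'.toSet ⊂ P.toSet ∧ P.toSet ⊆ Q.toSet}

def relDepth (S : Set (Cube d)) (Q' Q : Cube d) : ℕ :=
  (ancestorsIn S Q' Q).ncard

def generation (S : Set (Cube d)) (Q : Cube d) (m : ℕ) : Set (Cube d) :=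
  {P ∈ S | relDepth S P Q = m}

lemma ssubset_of_relDepth_pos {S : Set (Cube d)} {Q' Q : Cube d} (h : 0 < relDepth S Q' Q) :
    Q'.toSet ⊂ Q.toSet := by
  obtain ⟨P, -, hQ'P, hPQ⟩ := nonempty_of_ncard_ne_zero h.ne'
  exact hQ'P.trans_subset hPQ

variable [NeZero d] {D S : Set (Cube d)} (hD : IsDyadicLattice D) (hSD : S ⊆ D)
include hD hSD

lemma ancestorsIn_finite {Q' : Cube d} (hQ' : Q' ∈ S) (Q : Cube d) :
    (ancestorsIn S Q' Q).Finite :=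
  (hD.finite_supersets (hSD hQ') Q.side).subset fun _ ⟨hP, hQ'P, hPQ⟩ =>
    ⟨hSD hP, hQ'P.le, Cube.side_le_of_subset hPQ⟩

lemma relDepth_pos {Q' Q : Cube d} (hQ' : Q' ∈ S) (hQ : Q ∈ S) (h : Q'.toSet ⊂ Q.toSet) :
    0 < relDepth S Q' Q :=
  (ncard_pos (ancestorsIn_finite hD hSD hQ' Q)).2 ⟨Q, hQ, h, subset_rfl⟩

lemma relDepth_add {Q' Q Q'' : Cube d} (hQ' : Q' ∈ S) (hQ : Q ∈ S)
    (h : Q'.toSet ⊆ Q.toSet) (h' : Q.toSet ⊆ Q''.toSet) :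
    relDepth S Q' Q'' = relDepth S Q' Q + relDepth S Q Q'' := by
  have hunion : ancestorsIn S Q' Q'' = ancestorsIn S Q' Q ∪ ancestorsIn S Q Q'' := by
    ext P
    constructor
    · rintro ⟨hP, hQ'P, hPQ''⟩
      by_cases hPQ : P.toSet ⊆ Q.toSet
      · exact .inl ⟨hP, hQ'P, hPQ⟩
      · have hQP := ((hD.subset_or_subset_of_subset_of_subset (hSD hP) (hSD hQ) hQ'P.le h)
          |>.resolve_left hPQ)
        exact .inr ⟨hP, ssubset_of_subset_not_subset hQP hPQ, hPQ''⟩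
    · rintro (⟨hP, hQ'P, hPQ⟩ | ⟨hP, hQP, hPQ''⟩)
      · exact ⟨hP, hQ'P, hPQ.trans h'⟩
      · exact ⟨hP, h.trans_ssubset hQP, hPQ''⟩
  have hdisj : Disjoint (ancestorsIn S Q' Q) (ancestorsIn S Q Q'') :=
    disjoint_left.2 fun _ ⟨_, _, hPQ⟩ ⟨_, hQP, _⟩ => hQP.not_subset hPQ
  rw [relDepth, hunion, ncard_union_eq hdisj (ancestorsIn_finite hD hSD hQ' Q)
    (ancestorsIn_finite hD hSD hQ Q'')]
  rfl

/-- The smallest cube of `S` strictly above `Q'` is one generation closer to `Q`. -/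
lemma exists_relDepth_add_one {Q' Q : Cube d} (hQ' : Q' ∈ S) (h : 0 < relDepth S Q' Q) :
    ∃ P ∈ S, Q'.toSet ⊆ P.toSet ∧ relDepth S P Q + 1 = relDepth S Q' Q := by
  obtain ⟨P, hP, hmin⟩ := (ancestorsIn_finite hD hSD hQ' Q).exists_minimalFor Cube.toSet _
    (nonempty_of_ncard_ne_zero h.ne')
  refine ⟨P, hP.1, hP.2.1.le, ?_⟩
  have hparent : ancestorsIn S Q' P = {P} := by
    refine Subset.antisymm (fun X hX => ?_) (singleton_subset_iff.2 ⟨hP.1, hP.2.1, subset_rfl⟩)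
    exact Cube.toSet_injective
      (hX.2.2.antisymm (hmin ⟨hX.1, hX.2.1, hX.2.2.trans hP.2.2⟩ hX.2.2))
  have hQ'P : relDepth S Q' P = 1 := by rw [relDepth, hparent, ncard_singleton]
  rw [relDepth_add hD hSD hQ' hP.1 hP.2.1.le hP.2.2, hQ'P, add_comm]

lemma exists_relDepth_eq {Q' Q : Cube d} (hQ' : Q' ∈ S) {m : ℕ} (hm : 1 ≤ m)
    (hmQ' : m ≤ relDepth S Q' Q) : ∃ P ∈ S, Q'.toSet ⊆ P.toSet ∧ relDepth S P Q = m := by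
  induction h : relDepth S Q' Q generalizing Q' with
  | zero => omega
  | succ n ih =>
    rcases (h ▸ hmQ').eq_or_lt with rfl | hlt
    · exact ⟨Q', hQ', subset_rfl, h⟩
    obtain ⟨P, hP, hQ'P, hPQ⟩ := exists_relDepth_add_one (Q := Q) hD hSD hQ' (by omega)
    obtain ⟨P', hP', hPP', hP'Q⟩ := ih hP (by omega) (by omega)
    exact ⟨P', hP', hQ'P.trans hPP', hP'Q⟩

lemma pairwiseDisjoint_generation (Q : Cube d) {m : ℕ} (hm : 1 ≤ m) :
    (generation S Q m).PairwiseDisjoint Cube.toSet := by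
  have hnested : ∀ P ∈ generation S Q m, ∀ P' ∈ generation S Q m,
      P.toSet ⊆ P'.toSet → P = P' := by
    intro P ⟨hP, hPm⟩ P' ⟨hP', hP'm⟩ h
    by_contra hne
    have := relDepth_add (Q'' := Q) hD hSD hP hP' h (ssubset_of_relDepth_pos (S := S) (by omega)).le
    have := relDepth_pos hD hSD hP hP' (Cube.toSet_ssubset_of_subset_of_ne h hne)
    omega
  intro P hP P' hP' hne
  rcases hD.2.1 P (hSD hP.1) P' (hSD hP'.1) with h | h | h
  · exact absurd (hnested P hP P' hP' h) hne
  · exact absurd (hnested P' hP' P hP h).symm hne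
  · exact h

end RelDepth

section Sparse

variable {d : ℕ}

lemma volume_biUnion_le_two_mul_volume_biUnion {S L : Set (Cube d)}
    {E : Cube d → Set (Fin d → ℝ)} (hEmeas : ∀ Q ∈ S, MeasurableSet (E Q))
    (hEvol : ∀ Q ∈ S, volume Q.toSet < 2 * volume (E Q)) (hEdisj : S.PairwiseDisjoint E)
    (hLS : L ⊆ S) (hL : L.PairwiseDisjoint Cube.toSet) :
    volume (⋃ Q ∈ L, Q.toSet) ≤ 2 * volume (⋃ Q ∈ L, E Q) := by
  have hcount : L.Countable :=
    hL.countable_of_measure_pos (fun Q _ => Q.measurableSet_toSet)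
      fun Q _ => Q.volume_toSet_pos
  rw [measure_biUnion hcount hL fun Q _ => Q.measurableSet_toSet,
    measure_biUnion hcount (hEdisj.subset hLS) fun Q hQ => hEmeas Q (hLS hQ),
    ← ENNReal.tsum_mul_left]
  exact ENNReal.tsum_le_tsum fun Q => (hEvol Q (hLS Q.2)).le

variable [NeZero d] {D S : Set (Cube d)} (hD : IsDyadicLattice D) (hSD : S ⊆ D)
include hD hSD

lemma exists_volume_generation_le (hS : IsSparse S) {Q : Cube d} (hQ : Q ∈ S) :
    ∃ m ∈ Finset.Icc 1 4,
      volume (⋃ P ∈ generation S Q m, P.toSet) ≤ volume Q.toSet / 4 := by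
  obtain ⟨E, hEmeas, hEsub, hEvol, hEdisj⟩ := hS
  let B : ℕ → Set (Fin d → ℝ) := fun m => ⋃ P ∈ generation S Q m, E P
  have hcount : ∀ m ∈ Finset.Icc 1 4, (generation S Q m).Countable := fun m hm =>
    (pairwiseDisjoint_generation hD hSD Q (Finset.mem_Icc.1 hm).1).countable_of_measure_pos
      (fun P _ => P.measurableSet_toSet) fun P _ => P.volume_toSet_pos
  have hBmeas : ∀ m ∈ Finset.Icc 1 4, MeasurableSet (B m) := fun m hm =>
    .biUnion (hcount m hm) fun P hP => hEmeas P hP.1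
  have hBdisj : (Finset.Icc 1 4 : Set ℕ).PairwiseDisjoint B := by
    intro m _ n _ hmn
    simp only [B, Function.onFun, disjoint_iUnion_left, disjoint_iUnion_right]
    rintro P ⟨hP, rfl⟩ P' ⟨hP', rfl⟩
    exact hEdisj hP' hP fun h => hmn (by rw [h])
  have hBsub : ∀ m ∈ Finset.Icc 1 4, B m ⊆ Q.toSet \ E Q := fun m hm =>
    iUnion₂_subset fun P hP => by
      have hPQ := ssubset_of_relDepth_pos (hP.2.symm ▸ (Finset.mem_Icc.1 hm).1)
      exact subset_sdiff.2 ⟨(hEsub P hP.1).trans hPQ.le,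
        hEdisj hP.1 hQ fun h => hPQ.ne (congrArg Cube.toSet h)⟩
  refine ENNReal.exists_le_of_sum_le ⟨1, by simp⟩ ?_
  calc ∑ m ∈ Finset.Icc 1 4, volume (⋃ P ∈ generation S Q m, P.toSet)
      ≤ ∑ m ∈ Finset.Icc 1 4, 2 * volume (B m) := Finset.sum_le_sum fun m hm =>
        volume_biUnion_le_two_mul_volume_biUnion hEmeas hEvol hEdisj (sep_subset _ _)
          (pairwiseDisjoint_generation hD hSD Q (Finset.mem_Icc.1 hm).1)
    _ = 2 * volume (⋃ m ∈ Finset.Icc 1 4, B m) := by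
      rw [measure_biUnion_finset hBdisj hBmeas, Finset.mul_sum]
    _ ≤ 2 * volume (Q.toSet \ E Q) := by gcongr; exact iUnion₂_subset hBsub
    _ ≤ volume Q.toSet := two_mul_measure_sdiff_le (hEsub Q hQ) (hEmeas Q hQ) (hEvol Q hQ)
    _ = ∑ m ∈ Finset.Icc 1 4, volume Q.toSet / 4 := by
      rw [Finset.sum_const, Nat.card_Icc, nsmul_eq_mul, Nat.add_sub_cancel, Nat.cast_ofNat,
        ENNReal.mul_div_cancel (by norm_num) (by norm_num)]

end Sparse

section Colouring

variable {d : ℕ} {D S : Set (Cube d)} (hD : IsDyadicLattice D) (hSD : S ⊆ D)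
include hD hSD

lemma isStronglySparse_of_four_dvd_relDepth [NeZero d] (hS : IsSparse S) {T : Set (Cube d)}
    (hTS : T ⊆ S)
    (hT : ∀ Q' ∈ T, ∀ Q ∈ T, Q'.toSet ⊂ Q.toSet → 4 ∣ relDepth S Q' Q) :
    IsStronglySparse T := by
  intro Q hQ
  obtain ⟨m, hm, hvol⟩ := exists_volume_generation_le hD hSD hS (hTS hQ)
  obtain ⟨hm₁, hm₄⟩ := Finset.mem_Icc.1 hm
  refine (measure_mono ?_).trans hvol
  simp only [iUnion_subset_iff]
  intro Q' hQ' hQ'Q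
  have hpos := relDepth_pos hD hSD (hTS hQ') (hTS hQ) hQ'Q
  have h4 := hT Q' hQ' Q hQ hQ'Q
  obtain ⟨P, hP, hQ'P, hPQ⟩ :=
    exists_relDepth_eq hD hSD (hTS hQ') hm₁ (Q := Q) (by omega)
  exact hQ'P.trans (subset_biUnion_of_mem (u := Cube.toSet) ⟨hP, hPQ⟩)

def SharesAncestor (S : Set (Cube d)) (Q R : Cube d) : Prop :=
  ∃ P ∈ S, Q.toSet ⊆ P.toSet ∧ R.toSet ⊆ P.toSet

omit hD hSD in
lemma sharesAncestor_refl {Q : Cube d} (hQ : Q ∈ S) : SharesAncestor S Q Q :=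
  ⟨Q, hQ, subset_rfl, subset_rfl⟩

lemma sharesAncestor_iff_of_subset {Q' Q R : Cube d} (hQ : Q ∈ S) (h : Q'.toSet ⊆ Q.toSet) :
    SharesAncestor S Q' R ↔ SharesAncestor S Q R := by
  constructor
  · rintro ⟨P, hP, hQ'P, hRP⟩
    rcases hD.subset_or_subset_of_subset_of_subset (hSD hP) (hSD hQ) hQ'P h with hPQ | hQP
    · exact ⟨Q, hQ, subset_rfl, hRP.trans hPQ⟩
    · exact ⟨P, hP, hQP, hRP⟩
  · rintro ⟨P, hP, hQP, hRP⟩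
    exact ⟨P, hP, h.trans hQP, hRP⟩

lemma relDepth_sub_relDepth_eq [NeZero d] {Q R P P' : Cube d} (hQ : Q ∈ S) (hR : R ∈ S)
    (hP : P ∈ S) (hP' : P' ∈ S) (hQP : Q.toSet ⊆ P.toSet) (hRP : R.toSet ⊆ P.toSet)
    (hQP' : Q.toSet ⊆ P'.toSet) (hRP' : R.toSet ⊆ P'.toSet) :
    (relDepth S Q P : ℤ) - relDepth S R P = (relDepth S Q P' : ℤ) - relDepth S R P' := by
  rcases hD.subset_or_subset_of_subset_of_subset (hSD hP) (hSD hP') hQP hQP' with h | h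
  · rw [relDepth_add hD hSD hQ hP hQP h, relDepth_add hD hSD hR hP hRP h]
    push_cast
    ring
  · rw [relDepth_add hD hSD hQ hP' hQP' h, relDepth_add hD hSD hR hP' hRP' h]
    push_cast
    ring

/-- Measure the depth of `Q` against a representative `R` of the cubes sharing an ancestor with
`Q`, through any common ancestor of `Q` and `R`. -/
lemma exists_depth_eq_add_relDepth [NeZero d] : ∃ c : Cube d → ℤ,
    ∀ Q' ∈ S, ∀ Q ∈ S, Q'.toSet ⊆ Q.toSet → c Q' = c Q + relDepth S Q' Q := by
  let rep : Cube d → Cube d := fun Q =>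
    Classical.epsilon fun R => R ∈ S ∧ SharesAncestor S Q R
  have hrep : ∀ Q ∈ S, rep Q ∈ S ∧ SharesAncestor S Q (rep Q) := fun Q hQ =>
    Classical.epsilon_spec (p := fun R => R ∈ S ∧ SharesAncestor S Q R)
      ⟨Q, hQ, sharesAncestor_refl hQ⟩
  have hrep_eq : ∀ Q' Q, Q ∈ S → Q'.toSet ⊆ Q.toSet → rep Q' = rep Q := fun Q' Q hQ h =>
    by simp only [rep, sharesAncestor_iff_of_subset hD hSD hQ h]
  choose! P hP hQP hRP using fun Q hQ => (hrep Q hQ).2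
  refine ⟨fun Q => relDepth S Q (P Q) - relDepth S (rep Q) (P Q), fun Q' hQ' Q hQ h => ?_⟩
  have hQ'P : Q'.toSet ⊆ (P Q).toSet := h.trans (hQP Q hQ)
  have hRP' : (rep Q).toSet ⊆ (P Q').toSet := hrep_eq Q' Q hQ h ▸ hRP Q' hQ'
  simp only [hrep_eq Q' Q hQ h]
  rw [relDepth_sub_relDepth_eq hD hSD hQ' (hrep Q hQ).1 (hP Q' hQ') (hP Q hQ) (hQP Q' hQ')
    hRP' hQ'P (hRP Q hQ), relDepth_add hD hSD hQ' hQ h (hQP Q hQ)]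
  push_cast
  ring

end Colouring

/-- **Lemma.** Every sparse collection of cubes contained in a dyadic lattice is the
union of eight subcollections, each satisfying the stronger sparsity condition. -/
theorem sparse_eq_union_of_eight_strongly_sparse {d : ℕ} (S : Set (Cube d))
    (D : Set (Cube d)) (hD : IsDyadicLattice D) (hSD : S ⊆ D) (hS : IsSparse S) :
    ∃ T : Fin 8 → Set (Cube d),
      S = ⋃ i : Fin 8, T i ∧ ∀ i : Fin 8, IsStronglySparse (T i) := by
  rcases Nat.eq_zero_or_pos d with rfl | hd
  · exact ⟨fun _ => S, (iUnion_const S).symm, fun _ => isStronglySparse_of_dim_zero S⟩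
  have : NeZero d := ⟨hd.ne'⟩
  obtain ⟨c, hc⟩ := exists_depth_eq_add_relDepth hD hSD
  refine ⟨fun i => {Q ∈ S | c Q % 4 = i}, ?_, fun i => ?_⟩
  · ext Q
    simp only [mem_iUnion, mem_sep_iff]
    refine ⟨fun hQ => ⟨⟨(c Q % 4).toNat, by omega⟩, hQ, by rw [Fin.val_mk]; omega⟩,
      fun ⟨_, hQ, _⟩ => hQ⟩
  · refine isStronglySparse_of_four_dvd_relDepth hD hSD hS (sep_subset _ _) ?_
    rintro Q' ⟨hQ', hQ'i⟩ Q ⟨hQ, hQi⟩ h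
    have := hc Q' hQ' Q hQ h.le
    omega
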